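/- arXiv:1708.01166 — 3 statements merged into one kernel-verified Lean document; each statement's English description precedes it below -/
import Mathlib

section
/- Let k be a field complete with respect to a nontrivial nonarchimedean absolute value, and let E(k) ⊆ k[[T]] be the ring of entire power series. Then the unit group of E(k) is exactly k^×: a power series f = Σ_{i≥0} aᵢTⁱ ∈ E(k) is invertible in E(k) if and only if a₀ ≠ 0 and aᵢ = 0 for all i ≥ 1. In particular, if f, g ∈ k[[T]] are both entire and f·g = 1 in k[[T]], then f is a nonzero constant. -/
/-- A power series `f = Σ aᵢ Tⁱ` over a normed field is *entire* (i.e. lies in the ring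
`E(k) = 𝒪(𝔸¹_rig)` of everywhere-convergent power series) if for every real `r > 0`
the sequence `‖aᵢ‖ * rⁱ` tends to `0`. -/
def IsEntire {k : Type*} [NormedField k] (f : PowerSeries k) : Prop :=
  ∀ r : ℝ, 0 < r →
    Filter.Tendsto (fun i : ℕ => ‖(PowerSeries.coeff i) f‖ * r ^ i) Filter.atTop (nhds 0)

/-!
For `r > 0` let `ν(f, r)` be the smallest index `m` maximising `‖aₘ‖ rᵐ`. In an ultrametric
field, the coefficient of `T^(ν(f,r) + ν(g,r))` in `f g` is dominated by the single term
`a_ν(f,r) b_ν(g,r)`, hence nonzero. If `f g = 1` this forces `ν(f, r) = 0`, i.e.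
`‖aᵢ‖ rⁱ ≤ ‖a₀‖` for all `i` and all `r > 0`; letting `r → ∞` kills every `aᵢ` with `i ≥ 1`.
-/

open Filter PowerSeries

lemma exists_forall_le_of_tendsto_zero {u : ℕ → ℝ} (hu : Tendsto u atTop (nhds 0)) {i : ℕ}
    (hi : 0 < u i) : ∃ m, ∀ j, u j ≤ u m := by
  obtain ⟨N, hN⟩ := eventually_atTop.mp (hu.eventually_lt_const hi)
  obtain ⟨m, -, hm⟩ := (Finset.Iic (N + i)).exists_max_image u ⟨i, by simp⟩
  refine ⟨m, fun j => ?_⟩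
  by_cases hj : j ≤ N + i
  · exact hm j (Finset.mem_Iic.mpr hj)
  · exact (hN j (by omega)).le.trans (hm i (by simp))

lemma eq_zero_of_forall_mul_pow_le {x C : ℝ} {j : ℕ} (hj : j ≠ 0) (hx : 0 ≤ x)
    (h : ∀ r : ℝ, 0 < r → x * r ^ j ≤ C) : x = 0 := by
  refine (hx.eq_or_lt.resolve_right fun hx => ?_).symm
  obtain ⟨r, hrC, hr⟩ := (((tendsto_pow_atTop hj).const_mul_atTop hx).eventually_ge_atTop (C + 1)
    |>.and (eventually_gt_atTop 0)).exists
  linarith [h r hr]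

section Dominant

variable {k : Type*} [NormedField k]

def IsLeastDominantIndex (r : ℝ) (f : k⟦X⟧) (m : ℕ) : Prop :=
  IsLeast {m | ∀ i, ‖coeff i f‖ * r ^ i ≤ ‖coeff m f‖ * r ^ m} m

namespace IsLeastDominantIndex

variable {r : ℝ} {f : k⟦X⟧} {m : ℕ}

lemma le (hm : IsLeastDominantIndex r f m) (i : ℕ) :
    ‖coeff i f‖ * r ^ i ≤ ‖coeff m f‖ * r ^ m :=
  hm.1 i

lemma lt (hm : IsLeastDominantIndex r f m) {i : ℕ} (hi : i < m) :
    ‖coeff i f‖ * r ^ i < ‖coeff m f‖ * r ^ m :=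
  lt_of_not_ge fun hle => (hm.2 fun j => (hm.le j).trans hle).not_gt hi

lemma pos (hm : IsLeastDominantIndex r f m) (hr : 0 < r) (hf : f ≠ 0) :
    0 < ‖coeff m f‖ * r ^ m := by
  obtain ⟨i, hi⟩ := exists_coeff_ne_zero_iff_ne_zero.mpr hf
  exact (by positivity : 0 < ‖coeff i f‖ * r ^ i).trans_le (hm.le i)

lemma mul_lt_mul {g : k⟦X⟧} {n : ℕ} (hm : IsLeastDominantIndex r f m)
    (hn : IsLeastDominantIndex r g n) (hr : 0 < r) (hf : f ≠ 0) (hg : g ≠ 0) {i j : ℕ}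
    (hij : i + j = m + n) (hne : (i, j) ≠ (m, n)) :
    (‖coeff i f‖ * r ^ i) * (‖coeff j g‖ * r ^ j) <
      (‖coeff m f‖ * r ^ m) * (‖coeff n g‖ * r ^ n) := by
  rcases lt_or_ge i m with hi | hi
  · exact mul_lt_mul_of_lt_of_le_of_nonneg_of_pos (hm.lt hi) (hn.le j) (by positivity)
      (hn.pos hr hg)
  · have hj : j < n := by grind
    exact mul_lt_mul_of_le_of_lt_of_nonneg_of_pos (hm.le i) (hn.lt hj) (by positivity)
      (hm.pos hr hf)

end IsLeastDominantIndex

lemma IsEntire.exists_isLeastDominantIndex {f : k⟦X⟧} (hf : IsEntire f) (hf0 : f ≠ 0) {r : ℝ}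
    (hr : 0 < r) : ∃ m, IsLeastDominantIndex r f m := by
  classical
  obtain ⟨i, hi⟩ := exists_coeff_ne_zero_iff_ne_zero.mpr hf0
  exact ⟨_, Set.Nonempty.isLeast_natFind
    (exists_forall_le_of_tendsto_zero (hf r hr) (by positivity : 0 < ‖coeff i f‖ * r ^ i))⟩

variable [IsUltrametricDist k]

lemma norm_coeff_add_mul_of_isLeastDominantIndex {f g : k⟦X⟧} (hf : f ≠ 0) (hg : g ≠ 0)
    {r : ℝ} (hr : 0 < r) {m n : ℕ} (hm : IsLeastDominantIndex r f m)
    (hn : IsLeastDominantIndex r g n) :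
    ‖coeff (m + n) (f * g)‖ = ‖coeff m f‖ * ‖coeff n g‖ := by
  rw [coeff_mul, ← norm_mul]
  refine (IsUltrametricDist.isNonarchimedean_norm (R := k)).apply_sum_eq_of_lt (k := (m, n))
    (fun a => (norm_neg a).symm) (Finset.HasAntidiagonal.mem_antidiagonal.mpr rfl) ?_
  rintro ⟨i, j⟩ hij hne
  have hsum : i + j = m + n := Finset.HasAntidiagonal.mem_antidiagonal.mp hij
  rw [norm_mul, norm_mul, ← mul_lt_mul_iff_left₀ (by positivity : (0 : ℝ) < r ^ (m + n))]
  calc ‖coeff i f‖ * ‖coeff j g‖ * r ^ (m + n)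
      = (‖coeff i f‖ * r ^ i) * (‖coeff j g‖ * r ^ j) := by rw [← hsum, pow_add]; ring
    _ < (‖coeff m f‖ * r ^ m) * (‖coeff n g‖ * r ^ n) := hm.mul_lt_mul hn hr hf hg hsum hne
    _ = ‖coeff m f‖ * ‖coeff n g‖ * r ^ (m + n) := by rw [pow_add]; ring

end Dominant

lemma coeff_zero_ne_zero_of_mul_eq_one {R : Type*} [CommSemiring R] [Nontrivial R]
    {f g : R⟦X⟧} (h : f * g = 1) : coeff 0 f ≠ 0 := by
  rw [coeff_zero_eq_constantCoeff_apply]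
  exact ((IsUnit.of_mul_eq_one g h).map constantCoeff).ne_zero

lemma mul_C_inv_eq_one {K : Type*} [DivisionRing K] {f : K⟦X⟧} (h0 : coeff 0 f ≠ 0)
    (hf : ∀ i, 1 ≤ i → coeff i f = 0) : f * C (coeff 0 f)⁻¹ = 1 := by
  ext (_ | i)
  · simpa [coeff_mul_C] using mul_inv_cancel₀ h0
  · simp [coeff_mul_C, hf (i + 1) (by omega)]

section Units

variable {k : Type*} [NormedField k]

lemma isEntire_C (a : k) : IsEntire (C a) := fun _ _ =>
  tendsto_const_nhds.congr' <| (eventually_ne_atTop 0).mono fun i hi => by simp [coeff_C, hi]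

variable [IsUltrametricDist k]

lemma IsEntire.norm_coeff_mul_pow_le_of_mul_eq_one {f g : k⟦X⟧} (hf : IsEntire f)
    (hg : IsEntire g) (h : f * g = 1) {r : ℝ} (hr : 0 < r) (j : ℕ) :
    ‖coeff j f‖ * r ^ j ≤ ‖coeff 0 f‖ := by
  have hf0 : f ≠ 0 := left_ne_zero_of_mul_eq_one h
  have hg0 : g ≠ 0 := right_ne_zero_of_mul_eq_one h
  obtain ⟨m, hm⟩ := hf.exists_isLeastDominantIndex hf0 hr
  obtain ⟨n, hn⟩ := hg.exists_isLeastDominantIndex hg0 hr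
  have hmn : m + n = 0 := by
    by_contra hmn
    have hprod := norm_coeff_add_mul_of_isLeastDominantIndex hf0 hg0 hr hm hn
    rw [h, coeff_one, if_neg hmn, norm_zero] at hprod
    obtain h0 | h0 := mul_eq_zero.mp hprod.symm
    · simpa [h0] using hm.pos hr hf0
    · simpa [h0] using hn.pos hr hg0
  simpa [show m = 0 by omega] using hm.le j

lemma IsEntire.coeff_eq_zero_of_mul_eq_one {f g : k⟦X⟧} (hf : IsEntire f) (hg : IsEntire g)
    (h : f * g = 1) {j : ℕ} (hj : j ≠ 0) : coeff j f = 0 :=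
  norm_eq_zero.mp <| eq_zero_of_forall_mul_pow_le hj (norm_nonneg _) fun _ hr =>
    hf.norm_coeff_mul_pow_le_of_mul_eq_one hg h hr j

end Units

theorem isUnit_entire_iff_constant_general {k : Type*} [NontriviallyNormedField k]
    [IsUltrametricDist k] :
    (∀ f : PowerSeries k, IsEntire f →
      ((∃ g : PowerSeries k, IsEntire g ∧ f * g = 1) ↔
        ((PowerSeries.coeff 0) f ≠ 0 ∧ ∀ i : ℕ, 1 ≤ i → (PowerSeries.coeff i) f = 0))) ∧
    (∀ f g : PowerSeries k, IsEntire f → IsEntire g → f * g = 1 →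
      ((PowerSeries.coeff 0) f ≠ 0 ∧ ∀ i : ℕ, 1 ≤ i → (PowerSeries.coeff i) f = 0)) := by
  have hunit : ∀ f g : PowerSeries k, IsEntire f → IsEntire g → f * g = 1 →
      ((PowerSeries.coeff 0) f ≠ 0 ∧ ∀ i : ℕ, 1 ≤ i → (PowerSeries.coeff i) f = 0) :=
    fun f g hf hg h => ⟨coeff_zero_ne_zero_of_mul_eq_one h,
      fun _ hi => hf.coeff_eq_zero_of_mul_eq_one hg h (by omega)⟩
  refine ⟨fun f hf => ⟨fun ⟨g, hg, h⟩ => hunit f g hf hg h, fun ⟨h0, hcoeff⟩ => ?_⟩, hunit⟩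
  exact ⟨C (coeff 0 f)⁻¹, isEntire_C _, mul_C_inv_eq_one h0 hcoeff⟩

/-- Over a field `k` that is complete with respect to a nontrivial nonarchimedean absolute
value, the unit group of the ring `E(k)` of entire power series is exactly `k^×`:
an entire power series `f = Σ aᵢ Tⁱ` is invertible in `E(k)` if and only if `a₀ ≠ 0` and
`aᵢ = 0` for all `i ≥ 1`.  In particular, if `f, g` are entire and `f * g = 1`, then `f` is
a nonzero constant. -/
theorem isUnit_entire_iff_constant {k : Type*} [NontriviallyNormedField k]
    [IsUltrametricDist k] [CompleteSpace k] :
    (∀ f : PowerSeries k, IsEntire f →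
      ((∃ g : PowerSeries k, IsEntire g ∧ f * g = 1) ↔
        ((PowerSeries.coeff 0) f ≠ 0 ∧ ∀ i : ℕ, 1 ≤ i → (PowerSeries.coeff i) f = 0))) ∧
    (∀ f g : PowerSeries k, IsEntire f → IsEntire g → f * g = 1 →
      ((PowerSeries.coeff 0) f ≠ 0 ∧ ∀ i : ℕ, 1 ≤ i → (PowerSeries.coeff i) f = 0)) :=
  isUnit_entire_iff_constant_general
end

section
/- Let A be a commutative ring equipped with a power-multiplicative nonarchimedean ring norm ‖·‖ with respect to which A is complete, and let E(A) ⊆ A[[T]] be the subring of power series f = Σ_{i≥0} fᵢTⁱ such that for every real r > 0 the sequence (‖fᵢ‖·rⁱ)_i tends to 0. Then f ∈ E(A) is a unit of E(A) if and only if f₀ is a unit of A and fᵢ = 0 for all i ≥ 1; that is, the unit group of E(A) is isomorphic to A^×. (This is the statement 𝒪(Sp A × A¹_rig)^× ≅ A^× for a reduced affinoid algebra A.) -/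
/-!
Suppose `f * g = 1` in `E(A)` while `fᵢ ≠ 0` for some `i ≥ 1`. As the norm is power-multiplicative
and nonarchimedean, Zorn's lemma applied to the `seminormFromConst` construction yields a
multiplicative nonarchimedean seminorm `χ ≤ ‖·‖` with `χ(fᵢ) = ‖fᵢ‖ ≠ 0`. For every `r > 0` the
Gauss norm `maxⱼ χ(fⱼ) rʲ` is then multiplicative: at the sum of the last indices where the
maxima for `f` and `g` are attained, the coefficient of `f * g` is dominated by a single term.
Since `f * g = 1`, that sum is `0`, so `χ(fᵢ) rⁱ ≤ χ(f₀)` for every `r > 0`, forcing `χ(fᵢ) = 0`.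
-/

/-- A power series `f = Σ fᵢ Tⁱ` over a normed ring `A` lies in
`E(A) = 𝒪(Sp A × 𝔸¹_rig)` (the everywhere-convergent power series) if for every real
`r > 0` the sequence `‖fᵢ‖ * rⁱ` tends to `0`. -/
def IsEntireOver {A : Type*} [NormedRing A] (f : PowerSeries A) : Prop :=
  ∀ r : ℝ, 0 < r →
    Filter.Tendsto (fun i : ℕ => ‖(PowerSeries.coeff i) f‖ * r ^ i) Filter.atTop (nhds 0)

open Filter Topology PowerSeries

section MulRingSeminorm

variable {R : Type*} [CommRing R] {f : RingSeminorm R} {c : R}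

structure IsPowMulMinorant (f : RingSeminorm R) (p : R → ℝ) : Prop where
  map_zero : p 0 = 0
  map_neg (x : R) : p (-x) = p x
  map_mul_le (x y : R) : p (x * y) ≤ p x * p y
  isNonarchimedean : IsNonarchimedean p
  isPowMul : IsPowMul p
  le (x : R) : p x ≤ f x

structure IsPowMulMinorantAt (f : RingSeminorm R) (c : R) (p : R → ℝ) : Prop
    extends IsPowMulMinorant f p where
  map_const : p c = f c
  map_const_mul (x : R) : p (c * x) = p c * p x

namespace IsPowMulMinorant

variable {p : R → ℝ}

theorem nonneg (hp : IsPowMulMinorant f p) (x : R) : 0 ≤ p x := by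
  simpa [hp.map_zero, hp.map_neg] using hp.isNonarchimedean x (-x)

def toRingSeminorm (hp : IsPowMulMinorant f p) : RingSeminorm R where
  toFun := p
  map_zero' := hp.map_zero
  add_le' x y := (hp.isNonarchimedean x y).trans
    (max_le_add_of_nonneg (hp.nonneg x) (hp.nonneg y))
  neg' := hp.map_neg
  mul_le' := hp.map_mul_le

end IsPowMulMinorant

theorem isPowMulMinorant_seminormFromConst {P : RingSeminorm R} (hP : IsPowMulMinorant f P)
    {x : R} (hx : P x ≠ 0) : IsPowMulMinorant f (seminormFromConst' x P) :=
  have hP1 := hP.isPowMul.map_one_le_one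
  { map_zero := map_zero (seminormFromConst hP1 hx hP.isPowMul)
    map_neg := map_neg_eq_map (seminormFromConst hP1 hx hP.isPowMul)
    map_mul_le := map_mul_le_mul (seminormFromConst hP1 hx hP.isPowMul)
    isNonarchimedean :=
      seminormFromConst_isNonarchimedean hP1 hx hP.isPowMul hP.isNonarchimedean
    isPowMul := seminormFromConst_isPowMul hP1 hx hP.isPowMul
    le := fun y => (seminormFromConst_le_seminorm hP1 hx hP.isPowMul y).trans (hP.le y) }

theorem isPowMulMinorantAt_iInf_of_isChain {s : Set (R → ℝ)} (hne : s.Nonempty)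
    (hs : ∀ p ∈ s, IsPowMulMinorantAt f c p) (hchain : IsChain (· ≤ ·) s) :
    IsPowMulMinorantAt f c (fun x => ⨅ p : s, (p : R → ℝ) x) := by
  have := hne.to_subtype
  have : IsDirected s (· ≥ ·) := ⟨fun p q => (hchain.total p.2 q.2).elim
    (fun h => ⟨p, le_rfl, h⟩) (fun h => ⟨q, h, le_rfl⟩)⟩
  have hp (p : s) := hs p p.2
  -- the infimum is a limit along the chain, and every defining property is a closed condition
  have lim (x : R) : Tendsto (fun p : s => (p : R → ℝ) x) atBot (𝓝 (⨅ p : s, (p : R → ℝ) x)) :=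
    tendsto_atBot_ciInf (fun p q h => h x) ⟨0, by rintro _ ⟨p, rfl⟩; exact (hp p).nonneg x⟩
  exact
    { map_zero := tendsto_nhds_unique (lim 0)
        (tendsto_const_nhds.congr fun p => (hp p).map_zero.symm)
      map_neg x := tendsto_nhds_unique (lim (-x)) ((lim x).congr fun p => ((hp p).map_neg x).symm)
      map_mul_le x y := le_of_tendsto_of_tendsto' (lim _) ((lim x).mul (lim y))
        fun p => (hp p).map_mul_le x y
      isNonarchimedean x y := le_of_tendsto_of_tendsto' (lim _) ((lim x).max (lim y))
        fun p => (hp p).isNonarchimedean x y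
      isPowMul x n hn := tendsto_nhds_unique (lim _)
        (((lim x).pow n).congr fun p => ((hp p).isPowMul x hn).symm)
      le x := le_of_tendsto' (lim x) fun p => (hp p).le x
      map_const := tendsto_nhds_unique (lim c)
        (tendsto_const_nhds.congr fun p => (hp p).map_const.symm)
      map_const_mul x := tendsto_nhds_unique (lim _)
        (((lim c).mul (lim x)).congr fun p => ((hp p).map_const_mul x).symm) }

theorem exists_minimal_isPowMulMinorantAt (hf : IsPowMul f) (hna : IsNonarchimedean f)
    (hc : f c ≠ 0) : ∃ p, Minimal (IsPowMulMinorantAt f c) p := by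
  have hf1 := hf.map_one_le_one
  have h₀ : IsPowMulMinorantAt f c (seminormFromConst' c f) :=
    { isPowMulMinorant_seminormFromConst
        ⟨map_zero f, map_neg_eq_map f, map_mul_le_mul f, hna, hf, fun _ => le_rfl⟩ hc with
      map_const := seminormFromConst_apply_c hf1 hc hf
      map_const_mul := seminormFromConst_const_mul hf1 hc hf }
  obtain ⟨p, hp, hmin⟩ := zorn_le₀ (α := (R → ℝ)ᵒᵈ) {p | IsPowMulMinorantAt f c p}
    fun s hs hchain => by
      rcases s.eq_empty_or_nonempty with rfl | hne
      · exact ⟨_, h₀, by simp⟩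
      · let t : Set (R → ℝ) := s
        exact ⟨fun x => ⨅ p : t, (p : R → ℝ) x,
          isPowMulMinorantAt_iInf_of_isChain hne hs hchain.symm,
          fun p hp x => ciInf_le (f := fun q : t => (q : R → ℝ) x)
            ⟨0, by rintro _ ⟨q, rfl⟩; exact (hs q.2).nonneg x⟩ ⟨p, hp⟩⟩
  exact ⟨p, hp, fun q hq hle => hmin hq hle⟩

theorem Minimal.map_mul_of_isPowMulMinorantAt {p : R → ℝ}
    (hp : Minimal (IsPowMulMinorantAt f c) p) (x y : R) : p (x * y) = p x * p y := by
  have hpc := hp.prop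
  by_cases hx : p x = 0
  · exact le_antisymm (by simpa [hx] using hpc.map_mul_le x y)
      (by simpa [hx] using hpc.nonneg (x * y))
  set P := hpc.toRingSeminorm
  have hP1 : P 1 ≤ 1 := hpc.isPowMul.map_one_le_one
  have hcmul : ∀ z, P (c * z) = P c * P z := hpc.map_const_mul
  have hq : IsPowMulMinorantAt f c (seminormFromConst' x P) :=
    { isPowMulMinorant_seminormFromConst hpc.toIsPowMulMinorant hx with
      map_const :=
        (seminormFromConst_apply_of_isMul hP1 hx hpc.isPowMul hcmul).trans hpc.map_const
      map_const_mul := seminormFromConst_isMul_of_isMul hP1 hx hpc.isPowMul hcmul }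
  have hqp : seminormFromConst' x P = p :=
    hp.eq_of_le hq fun z => seminormFromConst_le_seminorm hP1 hx hpc.isPowMul z
  rw [← hqp]
  exact seminormFromConst_const_mul hP1 hx hpc.isPowMul y

theorem RingSeminorm.exists_mulRingSeminorm_le (hf : IsPowMul f) (hna : IsNonarchimedean f)
    (hc : f c ≠ 0) :
    ∃ χ : MulRingSeminorm R, IsNonarchimedean χ ∧ (∀ x, χ x ≤ f x) ∧ χ c = f c := by
  obtain ⟨p, hp⟩ := exists_minimal_isPowMulMinorantAt hf hna hc
  have hpc := hp.prop
  have hp1 : p 1 = 1 := by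
    have h := hpc.map_const_mul 1
    rw [mul_one, hpc.map_const] at h
    exact (mul_eq_left₀ hc).1 h.symm
  exact ⟨{ hpc.toRingSeminorm with
      map_one' := hp1
      map_mul' := hp.map_mul_of_isPowMulMinorantAt },
    hpc.isNonarchimedean, hpc.le, hpc.map_const⟩

end MulRingSeminorm

section LastArgmax

variable {α : Type*} [LinearOrder α]

def IsLastArgmax (v : ℕ → α) (d : ℕ) : Prop :=
  (∀ i, v i ≤ v d) ∧ ∀ i, d < i → v i < v d

theorem Filter.Tendsto.exists_isLastArgmax [TopologicalSpace α] [OrderTopology α]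
    {v : ℕ → α} {a : α} (hv : Tendsto v atTop (𝓝 a)) {k : ℕ} (hk : a < v k) :
    ∃ d, IsLastArgmax v d := by
  classical
  obtain ⟨N, hN⟩ := eventually_atTop.1 (hv.eventually (gt_mem_nhds hk))
  have hkN : k < N := not_le.1 fun h => lt_irrefl _ (hN k h)
  obtain ⟨m, hmN, hm⟩ : ∃ m ≤ N, ∀ i, v i ≤ v m := by
    obtain ⟨m, hm, hmax⟩ := (Finset.range N).exists_max_image v ⟨k, Finset.mem_range.2 hkN⟩
    refine ⟨m, (Finset.mem_range.1 hm).le, fun i => ?_⟩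
    rcases lt_or_ge i N with hi | hi
    · exact hmax i (Finset.mem_range.2 hi)
    · exact (hN i hi).le.trans (hmax k (Finset.mem_range.2 hkN))
  have hd := Nat.findGreatest_spec (P := fun d => ∀ i, v i ≤ v d) hmN hm
  refine ⟨_, hd, fun i hi => ?_⟩
  rcases le_or_gt i N with hiN | hiN
  · obtain ⟨j, hj⟩ := not_forall.1 (Nat.findGreatest_is_greatest hi hiN)
    exact (lt_of_not_ge hj).trans_le (hd j)
  · exact (hN i hiN.le).trans_le (hd k)

theorem IsLastArgmax.mul_lt_mul {u v : ℕ → ℝ} {d e i j : ℕ} (hu : IsLastArgmax u d)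
    (hv : IsLastArgmax v e) (hu0 : ∀ i, 0 ≤ u i) (hv0 : ∀ j, 0 ≤ v j) (hud : 0 < u d)
    (hve : 0 < v e) (hij : i + j = d + e) (hid : i ≠ d) : u i * v j < u d * v e := by
  rcases hid.lt_or_gt with hid | hid
  · exact mul_lt_mul' (hu.1 i) (hv.2 j (by omega)) (hv0 j) hud
  · rw [mul_comm, mul_comm (u d)]
    exact mul_lt_mul' (hv.1 j) (hu.2 i hid) (hu0 i) hve

end LastArgmax

section GaussNorm

variable {R : Type*} [Ring R] {χ : MulRingSeminorm R}

theorem MulRingSeminorm.map_coeff_add_mul_of_isLastArgmax (hna : IsNonarchimedean χ)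
    {f g : R⟦X⟧} {r : ℝ} (hr : 0 < r) {d e : ℕ}
    (hd : IsLastArgmax (fun i => χ (coeff i f) * r ^ i) d)
    (he : IsLastArgmax (fun j => χ (coeff j g) * r ^ j) e)
    (hfd : 0 < χ (coeff d f)) (hge : 0 < χ (coeff e g)) :
    χ (coeff (d + e) (f * g)) = χ (coeff d f) * χ (coeff e g) := by
  rw [coeff_mul, ← map_mul, hna.apply_sum_eq_of_lt (fun a => (map_neg_eq_map χ a).symm)
    (k := (d, e)) (by simp)]
  rintro ⟨i, j⟩ hij hne
  replace hij : i + j = d + e := by simpa using hij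
  have hid : i ≠ d := fun h => hne (Prod.ext h (by simp only; omega))
  have key := hd.mul_lt_mul he (fun _ => by positivity) (fun _ => by positivity)
    (by positivity) (by positivity) hij hid
  simp only [map_mul]
  have hr' : 0 < r ^ (d + e) := by positivity
  rw [← mul_lt_mul_iff_left₀ hr']
  calc χ (coeff i f) * χ (coeff j g) * r ^ (d + e)
      = χ (coeff i f) * r ^ i * (χ (coeff j g) * r ^ j) := by rw [← hij, pow_add]; ring
    _ < χ (coeff d f) * r ^ d * (χ (coeff e g) * r ^ e) := key
    _ = χ (coeff d f) * χ (coeff e g) * r ^ (d + e) := by rw [pow_add]; ring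

theorem MulRingSeminorm.map_coeff_mul_pow_le_of_mul_eq_one (hna : IsNonarchimedean χ)
    {f g : R⟦X⟧} (hfg : f * g = 1) {r : ℝ} (hr : 0 < r)
    (hf : Tendsto (fun i => χ (coeff i f) * r ^ i) atTop (𝓝 0))
    (hg : Tendsto (fun j => χ (coeff j g) * r ^ j) atTop (𝓝 0)) (i : ℕ) :
    χ (coeff i f) * r ^ i ≤ χ (coeff 0 f) := by
  have h₀ : χ (coeff 0 f) * χ (coeff 0 g) = 1 := by
    rw [← map_mul, ← map_one χ]
    simpa using congrArg (fun h => χ (coeff 0 h)) hfg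
  have hf₀ : 0 < χ (coeff 0 f) := pos_of_mul_pos_left (h₀ ▸ one_pos) (apply_nonneg χ _)
  have hg₀ : 0 < χ (coeff 0 g) := pos_of_mul_pos_right (h₀ ▸ one_pos) (apply_nonneg χ _)
  obtain ⟨d, hd⟩ := hf.exists_isLastArgmax (k := 0) (by simpa using hf₀)
  obtain ⟨e, he⟩ := hg.exists_isLastArgmax (k := 0) (by simpa using hg₀)
  have hfd : 0 < χ (coeff d f) :=
    pos_of_mul_pos_left ((by simpa using hf₀ : _ < _).trans_le (hd.1 0)) (by positivity)
  have hge : 0 < χ (coeff e g) :=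
    pos_of_mul_pos_left ((by simpa using hg₀ : _ < _).trans_le (he.1 0)) (by positivity)
  have hde := MulRingSeminorm.map_coeff_add_mul_of_isLastArgmax hna hr hd he hfd hge
  have : d + e = 0 := by
    by_contra h
    rw [hfg, coeff_one, if_neg h, map_zero] at hde
    exact (mul_pos hfd hge).ne hde
  simpa [show d = 0 by omega] using hd.1 i

end GaussNorm

theorem eq_zero_of_forall_mul_pow_le_s1 {a b : ℝ} {n : ℕ} (hn : n ≠ 0) (ha : 0 ≤ a)
    (h : ∀ r > 0, a * r ^ n ≤ b) : a = 0 := by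
  refine (ha.lt_or_eq.resolve_left fun ha => ?_).symm
  obtain ⟨r, hrb, hr⟩ := (((tendsto_pow_atTop hn).const_mul_atTop ha).eventually_gt_atTop b
    |>.and (eventually_gt_atTop 0)).exists
  exact (h r hr).not_gt hrb

section IsEntireOver

variable {A : Type*}

theorem isEntireOver_C [NormedRing A] (a : A) : IsEntireOver (C a) := fun _ _ =>
  tendsto_const_nhds.congr' <| by
    filter_upwards [eventually_ne_atTop 0] with i hi
    simp [coeff_C, hi]

theorem IsEntireOver.tendsto_mul_pow [NormedRing A] {f : A⟦X⟧} (hf : IsEntireOver f)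
    {χ : A → ℝ} (hχ₀ : ∀ x, 0 ≤ χ x) (hχ : ∀ x, χ x ≤ ‖x‖) {r : ℝ} (hr : 0 < r) :
    Tendsto (fun i => χ (coeff i f) * r ^ i) atTop (𝓝 0) :=
  squeeze_zero (fun _ => mul_nonneg (hχ₀ _) (by positivity))
    (fun _ => mul_le_mul_of_nonneg_right (hχ _) (by positivity)) (hf r hr)

theorem IsEntireOver.coeff_eq_zero_of_mul_eq_one [NormedCommRing A] [IsUltrametricDist A]
    (hpm : IsPowMul (‖·‖ : A → ℝ)) {f g : A⟦X⟧} (hf : IsEntireOver f) (hg : IsEntireOver g)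
    (hfg : f * g = 1) {i : ℕ} (hi : i ≠ 0) : coeff i f = 0 := by
  by_contra h
  obtain ⟨χ, hna, hχ, hχi⟩ := (normRingSeminorm A).exists_mulRingSeminorm_le hpm
    IsUltrametricDist.isNonarchimedean_norm (c := coeff i f) (norm_ne_zero_iff.2 h)
  have hbound (r : ℝ) (hr : 0 < r) : χ (coeff i f) * r ^ i ≤ χ (coeff 0 f) :=
    MulRingSeminorm.map_coeff_mul_pow_le_of_mul_eq_one hna hfg hr
      (hf.tendsto_mul_pow (apply_nonneg χ) hχ hr) (hg.tendsto_mul_pow (apply_nonneg χ) hχ hr) i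
  exact h (norm_eq_zero.1 (hχi.symm.trans
    (eq_zero_of_forall_mul_pow_le_s1 hi (apply_nonneg χ _) hbound)))

end IsEntireOver

theorem isUnit_entireOver_iff_constant_general {A : Type*} [NormedCommRing A]
    [IsUltrametricDist A]
    (hpm : ∀ (a : A) (n : ℕ), 1 ≤ n → ‖a ^ n‖ = ‖a‖ ^ n)
    (f : PowerSeries A) (hf : IsEntireOver f) :
    (∃ g : PowerSeries A, IsEntireOver g ∧ f * g = 1) ↔
      (IsUnit ((PowerSeries.coeff 0) f) ∧
        ∀ i : ℕ, 1 ≤ i → (PowerSeries.coeff i) f = 0) := by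
  constructor
  · rintro ⟨g, hg, hfg⟩
    refine ⟨.of_mul_eq_one (coeff 0 g) (by simpa using congrArg (coeff 0) hfg),
      fun i hi => ?_⟩
    exact hf.coeff_eq_zero_of_mul_eq_one (fun a n => hpm a n) hg hfg (by omega)
  · rintro ⟨hu, hzero⟩
    have hfC : f = C (coeff 0 f) := by
      ext (_ | i)
      · simp
      · simp [hzero]
    obtain ⟨b, hb⟩ := hu.exists_right_inv
    exact ⟨C b, isEntireOver_C b, by rw [hfC, ← map_mul, hb, map_one]⟩

/-- Let `A` be a commutative ring, complete with respect to a power-multiplicative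
nonarchimedean ring norm.  A power series `f = Σ fᵢ Tⁱ ∈ E(A)` is a unit of `E(A)` if and
only if `f₀` is a unit of `A` and `fᵢ = 0` for all `i ≥ 1`; that is,
`E(A)^× ≅ A^×` (the statement `𝒪(Sp A × 𝔸¹_rig)^× ≅ A^×`). -/
theorem isUnit_entireOver_iff_constant {A : Type*} [NormedCommRing A] [NormOneClass A]
    [IsUltrametricDist A] [CompleteSpace A]
    (hpm : ∀ (a : A) (n : ℕ), 1 ≤ n → ‖a ^ n‖ = ‖a‖ ^ n)
    (f : PowerSeries A) (hf : IsEntireOver f) :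
    (∃ g : PowerSeries A, IsEntireOver g ∧ f * g = 1) ↔
      (IsUnit ((PowerSeries.coeff 0) f) ∧
        ∀ i : ℕ, 1 ≤ i → (PowerSeries.coeff i) f = 0) :=
  isUnit_entireOver_iff_constant_general hpm f hf
end

section
/- Let A be a commutative ring equipped with a nonarchimedean ring norm ‖·‖, let r ≥ 1 be a real number, and let f = 1 + Σ_{i≥1} fᵢTⁱ ∈ A[[T]] be a power series with constant coefficient 1 such that ‖fᵢ‖·rⁱ < 1 for all i ≥ 1. If g = Σ_{i≥0} gᵢTⁱ ∈ A[[T]] satisfies f·g = 1 in A[[T]], then g₀ = 1 and ‖gᵢ‖·rⁱ < 1 for all i ≥ 1. -/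
/-!
By the ultrametric inequality, the recursion `gᵢ = -∑_{j=1}^{i} fⱼ g_{i-j}` bounds `‖gᵢ‖ rⁱ` by a
single product `(‖fⱼ‖ rʲ) (‖g_{i-j}‖ r^{i-j})`, whose first factor is `< 1` and whose second is
`≤ 1` by strong induction (it equals `1` when `j = i`).
-/

open PowerSeries Finset

namespace PowerSeries

variable {R : Type*}

theorem coeff_zero_eq_one_of_mul_eq_one [CommSemiring R] {f g : R⟦X⟧} (hf0 : coeff 0 f = 1)
    (hfg : f * g = 1) : coeff 0 g = 1 := by
  rw [coeff_zero_eq_constantCoeff_apply] at hf0 ⊢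
  simpa [hf0] using congrArg constantCoeff hfg

theorem coeff_eq_neg_sum_of_mul_eq_one [CommRing R] {f g : R⟦X⟧} (hf0 : coeff 0 f = 1)
    (hfg : f * g = 1) {i : ℕ} (hi : i ≠ 0) :
    coeff i g = -∑ j ∈ Icc 1 i, coeff j f * coeff (i - j) g := by
  have h := congrArg (coeff i) hfg
  rw [coeff_mul, Nat.sum_antidiagonal_eq_sum_range_succ (fun j k => coeff j f * coeff k g),
    sum_range_succ', coeff_one, if_neg hi, hf0, one_mul, Nat.sub_zero,
    range_eq_Ico, sum_Ico_add' (fun j => coeff j f * coeff (i - j) g), zero_add,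
    Ico_add_one_right_eq_Icc] at h
  linear_combination h

end PowerSeries

theorem norm_mul_mul_pow_lt_one {A : Type*} [SeminormedRing A] {r : ℝ} (hr : 0 ≤ r)
    {a b : A} {m n : ℕ} (ha : ‖a‖ * r ^ m < 1) (hb : ‖b‖ * r ^ n ≤ 1) :
    ‖a * b‖ * r ^ (m + n) < 1 :=
  calc ‖a * b‖ * r ^ (m + n) ≤ (‖a‖ * r ^ m) * (‖b‖ * r ^ n) := by
        rw [pow_add, mul_mul_mul_comm]
        gcongr
        exact norm_mul_le a b
    _ < 1 := mul_lt_one_of_nonneg_of_lt_one_left (by positivity) ha hb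

/-- Let `A` be a commutative ring with a nonarchimedean ring norm (submultiplicative, with
`‖1‖ = 1` and the ultrametric triangle inequality), let `r ≥ 1` be real, and let
`f = 1 + Σ_{i≥1} fᵢ Tⁱ` be a power series with constant coefficient `1` such that
`‖fᵢ‖ * rⁱ < 1` for all `i ≥ 1`.  If `g = Σ gᵢ Tⁱ` satisfies `f * g = 1` in `A[[T]]`,
then `g₀ = 1` and `‖gᵢ‖ * rⁱ < 1` for all `i ≥ 1`. -/
theorem inverse_coeff_norm_lt_one {A : Type*} [NormedCommRing A] [NormOneClass A]
    [IsUltrametricDist A]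
    (r : ℝ) (hr : 1 ≤ r) (f g : PowerSeries A)
    (hf0 : (PowerSeries.coeff (R := A) 0) f = 1)
    (hf : ∀ i : ℕ, 1 ≤ i → ‖(PowerSeries.coeff (R := A) i) f‖ * r ^ i < 1)
    (hfg : f * g = 1) :
    (PowerSeries.coeff (R := A) 0) g = 1 ∧
      ∀ i : ℕ, 1 ≤ i → ‖(PowerSeries.coeff (R := A) i) g‖ * r ^ i < 1 := by
  have hg0 := coeff_zero_eq_one_of_mul_eq_one hf0 hfg
  refine ⟨hg0, fun i => ?_⟩
  induction i using Nat.strong_induction_on with | _ i ih => ?_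
  intro hi
  obtain ⟨j, hj, hle⟩ := IsUltrametricDist.exists_norm_finsetSum_le_of_nonempty
    (nonempty_Icc.mpr hi) (fun j => coeff j f * coeff (i - j) g)
  rw [mem_Icc] at hj
  have hgj : ‖coeff (i - j) g‖ * r ^ (i - j) ≤ 1 := by
    rcases Nat.eq_zero_or_pos (i - j) with h | h
    · simp [h, hg0]
    · exact (ih _ (by omega) h).le
  calc ‖coeff i g‖ * r ^ i ≤ ‖coeff j f * coeff (i - j) g‖ * r ^ (j + (i - j)) := by
        rw [coeff_eq_neg_sum_of_mul_eq_one hf0 hfg (by omega), norm_neg, Nat.add_sub_cancel' hj.2]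
        gcongr
    _ < 1 := norm_mul_mul_pow_lt_one (by linarith) (hf j hj.1) hgj
end
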